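/- For every ρ > 0, lim_{z→∞} √(2π z³) θ_ρ(z) = K_0(ρ), where θ_ρ(z) = (ρ/√(2π³z)) ∫_0^∞ exp((π²-y²)/(2z)) exp(-ρ cosh y) sinh y sin(πy/z) dy and K_0 is the modified Bessel function of the third kind of index 0. -/

import Mathlib

open Real Filter MeasureTheory

/-- The (unnormalized) Hartman–Watson density `θ_ρ(z)`. -/
noncomputable def hartmanWatson (ρ z : ℝ) : ℝ :=
  ρ / Real.sqrt (2 * Real.pi ^ 3 * z) *
    ∫ y in Set.Ioi (0 : ℝ),
      Real.exp ((Real.pi ^ 2 - y ^ 2) / (2 * z)) * Real.exp (-(ρ * Real.cosh y)) *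
        Real.sinh y * Real.sin (Real.pi * y / z)

/-- The Macdonald function `K_0(ρ) = ∫_0^∞ e^{-ρ cosh y} dy`. -/
noncomputable def besselK0 (ρ : ℝ) : ℝ :=
  ∫ y in Set.Ioi (0 : ℝ), Real.exp (-(ρ * Real.cosh y))

/-!
Since `z / π * sin (π y / z) = y * sinc (π y / z)`, the quantity `√(2π z³) θ_ρ(z)` is the integral
of `ρ y sinh y e^{-ρ cosh y}` against the kernel `e^{(π² - y²)/(2z)} sinc (π y / z)`. For `z ≥ 1`
the kernel is bounded by `e^{π²/2}`, and it tends to `1` pointwise, so by dominated convergence the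
limit is `∫₀^∞ ρ y sinh y e^{-ρ cosh y} dy`; integrating by parts against `d(-e^{-ρ cosh y})`
turns this into `∫₀^∞ e^{-ρ cosh y} dy = K₀(ρ)`.
-/

open Set Topology

lemma self_le_cosh (x : ℝ) : x ≤ cosh x :=
  calc x ≤ |x| := le_abs_self x
    _ ≤ sinh |x| := self_le_sinh_iff.mpr (abs_nonneg x)
    _ ≤ cosh x := by rw [← cosh_abs]; exact (sinh_lt_cosh _).le

lemma mul_sq_mul_exp_neg_mul_le {ρ t : ℝ} (hρ : 0 < ρ) (ht : 0 ≤ t) :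
    ρ * t ^ 2 * exp (-(ρ * t)) ≤ 8 / ρ * exp (-(ρ / 2) * t) := by
  have hquad : (ρ / 2 * t) ^ 2 / 2 ≤ exp (ρ / 2 * t) := by
    simpa using pow_div_factorial_le_exp (ρ / 2 * t) (by positivity) 2
  have hsplit : exp (-(ρ / 2) * t) = exp (ρ / 2 * t) * exp (-(ρ * t)) := by
    rw [← exp_add]; ring_nf
  have hpoly : ρ * t ^ 2 ≤ 8 / ρ * exp (ρ / 2 * t) := by
    rw [div_mul_eq_mul_div, le_div_iff₀ hρ]
    nlinarith
  rw [hsplit, ← mul_assoc]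
  gcongr

lemma mul_mul_sinh_mul_exp_neg_mul_cosh_le {ρ y : ℝ} (hρ : 0 < ρ) (hy : 0 ≤ y) :
    y * (ρ * sinh y * exp (-(ρ * cosh y))) ≤ 8 / ρ * exp (-(ρ / 2) * y) := by
  have hy_cosh := self_le_cosh y
  have hsinh_cosh := (sinh_lt_cosh y).le
  have hsinh := sinh_nonneg_iff.mpr hy
  calc y * (ρ * sinh y * exp (-(ρ * cosh y))) = ρ * (y * sinh y) * exp (-(ρ * cosh y)) := by
        ring
    _ ≤ ρ * cosh y ^ 2 * exp (-(ρ * cosh y)) := by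
        rw [sq]; gcongr
    _ ≤ 8 / ρ * exp (-(ρ / 2) * cosh y) := mul_sq_mul_exp_neg_mul_le hρ (by linarith)
    _ ≤ 8 / ρ * exp (-(ρ / 2) * y) := by
        gcongr 8 / ρ * exp ?_; nlinarith

lemma integrableOn_mul_mul_sinh_mul_exp_neg_mul_cosh {ρ : ℝ} (hρ : 0 < ρ) :
    IntegrableOn (fun y => y * (ρ * sinh y * exp (-(ρ * cosh y)))) (Ioi 0) := by
  refine ((exp_neg_integrableOn_Ioi 0 (half_pos hρ)).const_mul (8 / ρ)).mono'
    (by fun_prop) ?_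
  filter_upwards [ae_restrict_mem measurableSet_Ioi] with y (hy : 0 < y)
  have := sinh_pos_iff.mpr hy
  rw [norm_of_nonneg (by positivity)]
  exact mul_mul_sinh_mul_exp_neg_mul_cosh_le hρ hy.le

lemma integrableOn_exp_neg_mul_cosh {ρ : ℝ} (hρ : 0 < ρ) :
    IntegrableOn (fun y => exp (-(ρ * cosh y))) (Ioi 0) := by
  refine (exp_neg_integrableOn_Ioi 0 hρ).mono' (by fun_prop) ?_
  filter_upwards [ae_restrict_mem measurableSet_Ioi] with y (hy : 0 < y)
  rw [norm_of_nonneg (exp_pos _).le, neg_mul, exp_le_exp, neg_le_neg_iff]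
  gcongr
  exact self_le_cosh y

lemma tendsto_mul_exp_neg_mul_cosh_atTop {ρ : ℝ} (hρ : 0 < ρ) :
    Tendsto (fun y => y * exp (-(ρ * cosh y))) atTop (𝓝 0) := by
  refine squeeze_zero' ?_ ?_
    (by simpa using tendsto_rpow_mul_exp_neg_mul_atTop_nhds_zero 1 ρ hρ)
  · filter_upwards [eventually_ge_atTop 0] with y hy
    positivity
  · filter_upwards [eventually_ge_atTop 0] with y hy
    gcongr
    exact self_le_cosh y

theorem besselK0_eq_integral {ρ : ℝ} (hρ : 0 < ρ) :
    besselK0 ρ = ∫ y in Ioi 0, y * (ρ * sinh y * exp (-(ρ * cosh y))) := by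
  have hv (y : ℝ) : HasDerivAt (fun y => -exp (-(ρ * cosh y)))
      (ρ * sinh y * exp (-(ρ * cosh y))) y :=
    ((hasDerivAt_cosh y).const_mul ρ).fun_neg.exp.fun_neg.congr_deriv (by ring)
  have hparts := integral_Ioi_mul_deriv_eq_deriv_mul (fun y _ => hasDerivAt_id' y)
    (fun y _ => hv y) (integrableOn_mul_mul_sinh_mul_exp_neg_mul_cosh hρ)
    (by simpa [Pi.mul_def] using (integrableOn_exp_neg_mul_cosh hρ).neg)
    (((continuous_id.mul (by fun_prop : Continuous fun y => -exp (-(ρ * cosh y)))).tendsto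
      0).mono_left nhdsWithin_le_nhds)
    (by simpa [Pi.mul_def] using (tendsto_mul_exp_neg_mul_cosh_atTop hρ).neg)
  simpa [besselK0, integral_neg] using hparts.symm

lemma tendsto_integral_exp_mul_sinc_mul {μ : Measure ℝ} {f : ℝ → ℝ} (hf : Integrable f μ) :
    Tendsto (fun z => ∫ y, exp ((π ^ 2 - y ^ 2) / (2 * z)) * sinc (π * y / z) * f y ∂μ)
      atTop (𝓝 (∫ y, f y ∂μ)) := by
  refine tendsto_integral_filter_of_dominated_convergence (fun y => exp (π ^ 2 / 2) * ‖f y‖)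
    (.of_forall fun z => (by fun_prop : Continuous fun y =>
      exp ((π ^ 2 - y ^ 2) / (2 * z)) * sinc (π * y / z)).aestronglyMeasurable.mul
        hf.aestronglyMeasurable) ?_ (hf.norm.const_mul _) (.of_forall fun y => ?_)
  · filter_upwards [eventually_ge_atTop 1] with z hz
    refine .of_forall fun y => ?_
    have hexponent : (π ^ 2 - y ^ 2) / (2 * z) ≤ π ^ 2 / 2 :=
      calc (π ^ 2 - y ^ 2) / (2 * z) ≤ π ^ 2 / (2 * z) :=
            div_le_div_of_nonneg_right (by nlinarith) (by linarith)
        _ ≤ π ^ 2 / 2 := div_le_div_of_nonneg_left (by positivity) two_pos (by linarith)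
    rw [norm_mul, norm_mul, norm_of_nonneg (exp_pos _).le]
    calc exp ((π ^ 2 - y ^ 2) / (2 * z)) * ‖sinc (π * y / z)‖ * ‖f y‖
        ≤ exp (π ^ 2 / 2) * 1 * ‖f y‖ := by
          gcongr
          exact abs_sinc_le_one _
      _ = exp (π ^ 2 / 2) * ‖f y‖ := by rw [mul_one]
  · have hexp : Tendsto (fun z => exp ((π ^ 2 - y ^ 2) / (2 * z))) atTop (𝓝 1) := by
      simpa [Function.comp_def] using (continuous_exp.tendsto 0).comp
        (tendsto_const_nhds.div_atTop (tendsto_id.const_mul_atTop two_pos))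
    have hsinc : Tendsto (fun z => sinc (π * y / z)) atTop (𝓝 1) := by
      simpa [Function.comp_def] using
        (continuous_sinc.tendsto 0).comp (tendsto_const_nhds.div_atTop tendsto_id)
    simpa using (hexp.mul hsinc).mul_const (f y)

lemma sqrt_mul_hartmanWatson (ρ : ℝ) {z : ℝ} (hz : 0 < z) :
    √(2 * π * z ^ 3) * hartmanWatson ρ z =
      ∫ y in Ioi 0, exp ((π ^ 2 - y ^ 2) / (2 * z)) * sinc (π * y / z) *
        (y * (ρ * sinh y * exp (-(ρ * cosh y)))) := by
  have hsqrt : √(2 * π * z ^ 3) = √(2 * π ^ 3 * z) * (z / π) := by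
    rw [← sqrt_sq (by positivity : 0 ≤ z / π), ← sqrt_mul (by positivity)]
    congr 1
    field_simp
  rw [hartmanWatson, ← mul_assoc, ← integral_const_mul]
  refine setIntegral_congr_fun measurableSet_Ioi fun y (hy : 0 < y) => ?_
  rw [sinc_of_ne_zero (by positivity), hsqrt]
  field_simp

/-- `lim_{z→∞} √(2π z³) θ_ρ(z) = K_0(ρ)`. -/
theorem hartmanWatson_tail_limit (ρ : ℝ) (hρ : 0 < ρ) :
    Tendsto (fun z : ℝ => Real.sqrt (2 * Real.pi * z ^ 3) * hartmanWatson ρ z)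
      atTop (nhds (besselK0 ρ)) := by
  rw [besselK0_eq_integral hρ]
  refine (tendsto_integral_exp_mul_sinc_mul
    (integrableOn_mul_mul_sinh_mul_exp_neg_mul_cosh hρ)).congr' ?_
  filter_upwards [eventually_gt_atTop 0] with z hz
  exact (sqrt_mul_hartmanWatson ρ hz).symm
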